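/- arXiv:1007.1177 — 5 statements merged into one kernel-verified Lean document; each statement's English description precedes it below -/
import Mathlib

section
/- A linear map C : M_d(C) → M_{d'}(C) is completely positive if and only if its Choi operator R_C is positive semidefinite. -/
/-!
If `Φ` is completely positive, apply `Φ ⊗ id_d` to the rank-one projector onto the unnormalised
maximally entangled vector `Σ_m |m⟩|m⟩` (here `vec 1`): the result is exactly the Choi operator.
Conversely, factor `R_Φ = Bᴴ B`. The conjugated rows of `B`, reshaped to `d' × d` matrices `K_r`,
are Kraus operators, `Φ A = Σ_r K_r A K_rᴴ`, because both sides have the Choi operator `Bᴴ B` and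
`Φ ↦ R_Φ` is injective. Hence `(Φ ⊗ id_n) X = Σ_r (K_r ⊗ 1) X (K_r ⊗ 1)ᴴ` is positive
semidefinite whenever `X` is.
-/

open Matrix Kronecker BigOperators
open scoped ComplexOrder

/-- The extension `Φ ⊗ id_n` of a linear map to the first tensor factor. -/
def extMap {d d' : ℕ} {n : Type*}
    (Φ : Matrix (Fin d) (Fin d) ℂ →ₗ[ℂ] Matrix (Fin d') (Fin d') ℂ)
    (X : Matrix (Fin d × n) (Fin d × n) ℂ) : Matrix (Fin d' × n) (Fin d' × n) ℂ :=
  Matrix.of fun p q => Φ (Matrix.of fun m n => X (m, p.2) (n, q.2)) p.1 q.1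

/-- The Choi operator `R_Φ := ∑ m n, Φ(|m⟩⟨n|) ⊗ |m⟩⟨n|`. -/
noncomputable def choi {d d' : ℕ}
    (Φ : Matrix (Fin d) (Fin d) ℂ →ₗ[ℂ] Matrix (Fin d') (Fin d') ℂ) :
    Matrix (Fin d' × Fin d) (Fin d' × Fin d) ℂ :=
  ∑ m : Fin d, ∑ n : Fin d,
    (Φ (Matrix.single m n 1)) ⊗ₖ Matrix.single m n (1 : ℂ)

open scoped MatrixOrder in
theorem Matrix.PosSemidef.exists_eq_conjTranspose_mul_self {𝕜 n : Type*} [RCLike 𝕜]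
    [Fintype n] [DecidableEq n] {A : Matrix n n 𝕜} (hA : A.PosSemidef) :
    ∃ B : Matrix n n 𝕜, A = Bᴴ * B :=
  ⟨CFC.sqrt A, by
    rw [← star_eq_conjTranspose, (CFC.sqrt_nonneg A).isSelfAdjoint.star_eq,
      CFC.sqrt_mul_sqrt_self A hA.nonneg]⟩

section conjMap

variable {R m m' : Type*} [CommSemiring R] [StarRing R] [Fintype m]

def conjMap (K : Matrix m' m R) : Matrix m m R →ₗ[R] Matrix m' m' R where
  toFun A := K * A * Kᴴ
  map_add' A B := by rw [Matrix.mul_add, Matrix.add_mul]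
  map_smul' c A := by rw [Matrix.mul_smul, Matrix.smul_mul, RingHom.id_apply]

@[simp]
theorem conjMap_apply (K : Matrix m' m R) (A : Matrix m m R) : conjMap K A = K * A * Kᴴ := rfl

end conjMap

section choi

variable {d d' : ℕ}

theorem choi_apply (Φ : Matrix (Fin d) (Fin d) ℂ →ₗ[ℂ] Matrix (Fin d') (Fin d') ℂ)
    (i j : Fin d') (k l : Fin d) :
    choi Φ (i, k) (j, l) = Φ (single k l 1) i j := by
  simp [choi, Matrix.sum_apply, single, ite_and]

theorem choi_injective :
    Function.Injective
      (choi : (Matrix (Fin d) (Fin d) ℂ →ₗ[ℂ] Matrix (Fin d') (Fin d') ℂ) → _) := by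
  intro Φ Ψ h
  refine ext_linearMap (h := fun k l => LinearMap.ext_ring ?_)
  ext i j
  simpa [choi_apply] using congr_fun₂ h (i, k) (j, l)

theorem choi_sum {ι : Type*} (s : Finset ι)
    (Φ : ι → Matrix (Fin d) (Fin d) ℂ →ₗ[ℂ] Matrix (Fin d') (Fin d') ℂ) :
    choi (∑ r ∈ s, Φ r) = ∑ r ∈ s, choi (Φ r) := by
  ext ⟨i, k⟩ ⟨j, l⟩
  simp only [choi_apply, LinearMap.sum_apply, Matrix.sum_apply]

theorem choi_conjMap_apply (K : Matrix (Fin d') (Fin d) ℂ) (i j : Fin d') (k l : Fin d) :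
    choi (conjMap K) (i, k) (j, l) = K i k * star (K j l) := by
  simp [choi_apply, mul_apply, single, ite_and]

theorem eq_sum_conjMap_of_choi_eq_conjTranspose_mul_self {ι : Type*} [Fintype ι]
    (Φ : Matrix (Fin d) (Fin d) ℂ →ₗ[ℂ] Matrix (Fin d') (Fin d') ℂ)
    (B : Matrix ι (Fin d' × Fin d) ℂ) (hB : choi Φ = Bᴴ * B) :
    Φ = ∑ r, conjMap (of fun i k => star (B r (i, k))) := by
  apply choi_injective
  ext ⟨i, k⟩ ⟨j, l⟩
  simp [hB, choi_sum, Matrix.sum_apply, choi_conjMap_apply, mul_apply]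

theorem extMap_sum {ι n : Type*} (s : Finset ι)
    (Φ : ι → Matrix (Fin d) (Fin d) ℂ →ₗ[ℂ] Matrix (Fin d') (Fin d') ℂ)
    (X : Matrix (Fin d × n) (Fin d × n) ℂ) :
    extMap (∑ r ∈ s, Φ r) X = ∑ r ∈ s, extMap (Φ r) X := by
  ext p q
  simp only [extMap, of_apply, LinearMap.sum_apply, Matrix.sum_apply]

theorem extMap_conjMap {n : Type*} [Fintype n] [DecidableEq n]
    (K : Matrix (Fin d') (Fin d) ℂ) (X : Matrix (Fin d × n) (Fin d × n) ℂ) :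
    extMap (conjMap K) X = (K ⊗ₖ (1 : Matrix n n ℂ)) * X * (K ⊗ₖ (1 : Matrix n n ℂ))ᴴ := by
  ext ⟨i, a⟩ ⟨j, b⟩
  simp [extMap, mul_apply, Fintype.sum_prod_type, one_apply, apply_ite (starRingEnd ℂ)]

theorem extMap_vecMulVec_vec_one
    (Φ : Matrix (Fin d) (Fin d) ℂ →ₗ[ℂ] Matrix (Fin d') (Fin d') ℂ) :
    extMap Φ (vecMulVec (vec 1) (star (vec 1))) = choi Φ := by
  ext ⟨i, k⟩ ⟨j, l⟩
  rw [choi_apply]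
  refine congrArg (fun A => Φ A i j) ?_
  ext m n
  simp [vecMulVec_apply, vec, one_apply, single, ← ite_and, and_comm]

end choi

/-- `Φ` is completely positive (i.e. `Φ ⊗ id_n` maps positive semidefinite
matrices to positive semidefinite matrices, for all `n`) iff its Choi operator is
positive semidefinite. -/
theorem completelyPositive_iff_choi_posSemidef {d d' : ℕ}
    (Φ : Matrix (Fin d) (Fin d) ℂ →ₗ[ℂ] Matrix (Fin d') (Fin d') ℂ) :
    (∀ (n : ℕ) (X : Matrix (Fin d × Fin n) (Fin d × Fin n) ℂ),
        X.PosSemidef → (extMap Φ X).PosSemidef) ↔ (choi Φ).PosSemidef := by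
  refine ⟨fun hΦ => ?_, fun hchoi n X hX => ?_⟩
  · rw [← extMap_vecMulVec_vec_one]
    exact hΦ d _ (posSemidef_vecMulVec_self_star _)
  · obtain ⟨B, hB⟩ := hchoi.exists_eq_conjTranspose_mul_self
    rw [eq_sum_conjMap_of_choi_eq_conjTranspose_mul_self Φ B hB, extMap_sum]
    refine posSemidef_sum _ fun r _ => ?_
    rw [extMap_conjMap]
    exact hX.mul_mul_conjTranspose_same _
end

section
/- Peres–Horodecki necessary criterion: if a bipartite positive semidefinite operator R on C^{d₁} ⊗ C^{d₂} is separable, then its partial transpose R^{T₂} (transposing the second tensor factor in the computational basis) is positive semidefinite. -/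
open Matrix Kronecker BigOperators
open scoped ComplexOrder

/-- A bipartite matrix is separable if it is a finite sum of tensor products of
positive semidefinite matrices. -/
def Separable {α β : Type*} [Fintype α] [Fintype β]
    (M : Matrix (α × β) (α × β) ℂ) : Prop :=
  ∃ (k : ℕ) (A : Fin k → Matrix α α ℂ) (B : Fin k → Matrix β β ℂ),
    (∀ i, (A i).PosSemidef) ∧ (∀ i, (B i).PosSemidef) ∧ M = ∑ i, (A i) ⊗ₖ (B i)

/-- Partial transpose of the second tensor factor (in the computational basis). -/
def ptranspose {α β : Type*} (M : Matrix (α × β) (α × β) ℂ) :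
    Matrix (α × β) (α × β) ℂ :=
  Matrix.of fun p q => M (p.1, q.2) (q.1, p.2)

/-
Partial transposition is linear and sends `A ⊗ B` to `A ⊗ Bᵀ`; since transposition preserves
positive semidefiniteness, it maps a sum of products of positive semidefinite matrices to another
such sum.
-/

section PartialTranspose

variable {α β : Type*}

theorem ptranspose_sum {ι : Type*} (s : Finset ι) (M : ι → Matrix (α × β) (α × β) ℂ) :
    ptranspose (∑ i ∈ s, M i) = ∑ i ∈ s, ptranspose (M i) := by
  ext p q
  simp only [ptranspose, Matrix.sum_apply, Matrix.of_apply]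

theorem ptranspose_kronecker (A : Matrix α α ℂ) (B : Matrix β β ℂ) :
    ptranspose (A ⊗ₖ B) = A ⊗ₖ Bᵀ := by
  ext ⟨i, j⟩ ⟨k, l⟩
  simp [ptranspose, kroneckerMap_apply]

theorem Separable.ptranspose_posSemidef [Fintype α] [Fintype β]
    {M : Matrix (α × β) (α × β) ℂ} (hM : Separable M) : (ptranspose M).PosSemidef := by
  obtain ⟨k, A, B, hA, hB, rfl⟩ := hM
  rw [ptranspose_sum]
  refine posSemidef_sum _ fun i _ => ?_
  rw [ptranspose_kronecker]
  exact (hA i).kronecker (hB i).transpose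

end PartialTranspose

theorem separable_implies_ptranspose_posSemidef_general {d₁ d₂ : ℕ}
    (R : Matrix (Fin d₁ × Fin d₂) (Fin d₁ × Fin d₂) ℂ)
    (hsep : Separable R) :
    (ptranspose R).PosSemidef :=
  hsep.ptranspose_posSemidef

/-- Peres–Horodecki, necessity: if a bipartite positive semidefinite
operator is separable, then its partial transpose is positive semidefinite. -/
theorem separable_implies_ptranspose_posSemidef {d₁ d₂ : ℕ}
    (R : Matrix (Fin d₁ × Fin d₂) (Fin d₁ × Fin d₂) ℂ)
    (hR : R.PosSemidef) (hsep : Separable R) :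
    (ptranspose R).PosSemidef :=
  separable_implies_ptranspose_posSemidef_general R hsep
end

section
/- Choi's extremality criterion (one direction): a completely positive trace-preserving map C with Kraus representation C(ρ) = Σ_k K_k ρ K_k† is extremal in the convex set of channels if the set {K_j† K_k}_{j,k} is linearly independent. -/
/-!
Let `V` be the matrix whose columns are the vectorised Kraus operators `K k`, so that the Choi
matrix of `C` is `V Vᴴ`. If `C = ½ (C₁ + C₂)` with `C₁, C₂` completely positive, then
`0 ≤ J(C₁) ≤ 2 V Vᴴ` forces `ker Vᴴ ⊆ ker J(C₁)`, hence `J(C₁) = V B Vᴴ` for some `B`, i.e.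
`C₁ ρ = ∑ j k, B j k • K j ρ (K k)ᴴ`. Trace preservation of `C₁` and of the average `C` says
`∑ j k, B j k • (K k)ᴴ K j = 1 = ∑ k, (K k)ᴴ K k`, and linear independence of the products
`(K j)ᴴ K k` gives `B = 1`, i.e. `C₁ = C`, and then `C₂ = C` as well.
-/

open Matrix Kronecker BigOperators
open scoped ComplexOrder

/-- A channel: completely positive (positive semidefinite Choi operator) and
trace-preserving linear map. -/
def IsChannel {d d' : ℕ}
    (Φ : Matrix (Fin d) (Fin d) ℂ →ₗ[ℂ] Matrix (Fin d') (Fin d') ℂ) : Prop :=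
  (choi Φ).PosSemidef ∧ ∀ X, (Φ X).trace = X.trace

namespace Matrix

variable {𝕜 m n : Type*} [RCLike 𝕜] [Fintype m] [Fintype n]

theorem PosSemidef.mulVec_eq_zero_of_add_mulVec_eq_zero {A A' : Matrix n n 𝕜}
    (hA : A.PosSemidef) (hA' : A'.PosSemidef) {y : n → 𝕜} (h : (A + A') *ᵥ y = 0) :
    A *ᵥ y = 0 := by
  have hsum : star y ⬝ᵥ A *ᵥ y + star y ⬝ᵥ A' *ᵥ y = 0 := by
    rw [← dotProduct_add, ← add_mulVec, h, dotProduct_zero]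
  exact (hA.dotProduct_mulVec_zero_iff y).mp <| ((add_eq_zero_iff_of_nonneg
    (hA.dotProduct_mulVec_nonneg y) (hA'.dotProduct_mulVec_nonneg y)).mp hsum).1

theorem mul_single_mul_apply {l o α : Type*} [NonUnitalNonAssocSemiring α] [DecidableEq m]
    [DecidableEq n] (M : Matrix l m α) (a : m) (b : n) (c : α) (N : Matrix n o α) (i : l) (j : o) :
    (M * single a b c * N) i j = M i a * c * N b j := by
  simp [mul_apply, single_apply, ite_and]

theorem isUnit_det_conjTranspose_mul_self [DecidableEq n] {V : Matrix m n 𝕜}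
    (hV : Function.Injective V.mulVec) : IsUnit (Vᴴ * V).det := by
  rw [← isUnit_iff_isUnit_det, ← mulVec_injective_iff_isUnit]
  intro x y hxy
  have hV₀ : V *ᵥ (x - y) = 0 :=
    (conjTranspose_mul_self_mulVec_eq_zero V (x - y)).mp (by rw [mulVec_sub, hxy, sub_self])
  exact sub_eq_zero.mp (hV (by rw [hV₀, mulVec_zero]))

/-- `P = V (Vᴴ V)⁻¹ Vᴴ` is the orthogonal projection onto the range of `V`; the kernel condition
gives `A P = A`, and since `A` and `P` are Hermitian also `P A = A`, so `A = P A P`. -/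
theorem IsHermitian.exists_eq_mul_mul_conjTranspose [DecidableEq n] {A : Matrix m m 𝕜}
    (hA : A.IsHermitian) {V : Matrix m n 𝕜} (hV : Function.Injective V.mulVec)
    (hker : ∀ y, Vᴴ *ᵥ y = 0 → A *ᵥ y = 0) : ∃ B : Matrix n n 𝕜, A = V * B * Vᴴ := by
  set G := Vᴴ * V
  set P := V * G⁻¹ * Vᴴ
  have hG : IsUnit G.det := isUnit_det_conjTranspose_mul_self hV
  have hVP : Vᴴ * P = Vᴴ := by
    rw [← Matrix.mul_assoc, ← Matrix.mul_assoc, mul_nonsing_inv G hG, Matrix.one_mul]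
  have hAP : A * P = A := ext_iff_mulVec.mpr fun v => by
    have h := hker (P *ᵥ v - v) (by rw [mulVec_sub, mulVec_mulVec, hVP, sub_self])
    rwa [mulVec_sub, mulVec_mulVec, sub_eq_zero] at h
  have hP : Pᴴ = P := by
    have hGh : Gᴴ = G := by simp only [G, conjTranspose_mul, conjTranspose_conjTranspose]
    simp only [P, conjTranspose_mul, conjTranspose_conjTranspose, conjTranspose_nonsing_inv,
      hGh, Matrix.mul_assoc]
  have hPA : P * A = A := by
    simpa only [conjTranspose_mul, hP, hA.eq] using congrArg (·ᴴ) hAP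
  refine ⟨G⁻¹ * Vᴴ * A * V * G⁻¹, ?_⟩
  calc A = P * A * P := by rw [hPA, hAP]
    _ = V * (G⁻¹ * Vᴴ * A * V * G⁻¹) * Vᴴ := by simp only [P, Matrix.mul_assoc]

end Matrix

section Kraus

variable {𝕜 ι m n : Type*} [RCLike 𝕜]

theorem LinearIndependent.of_conjTranspose_mul [Fintype m] {K : ι → Matrix m n 𝕜}
    (hLI : LinearIndependent 𝕜 (fun jk : ι × ι => (K jk.1)ᴴ * K jk.2)) :
    LinearIndependent 𝕜 K := by
  cases isEmpty_or_nonempty ι with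
  | inl _ => exact linearIndependent_empty_type
  | inr h =>
    obtain ⟨j⟩ := h
    exact LinearIndependent.of_comp (mulLeftLinearMap n 𝕜 (K j)ᴴ)
      (hLI.comp (Prod.mk j) (Prod.mk_right_injective j))

variable [Fintype ι]

noncomputable def krausMap [Fintype n] (K : ι → Matrix m n 𝕜) (B : Matrix ι ι 𝕜) :
    Matrix n n 𝕜 →ₗ[𝕜] Matrix m m 𝕜 :=
  ∑ j, ∑ k, B j k • (mulRightLinearMap m 𝕜 (K k)ᴴ ∘ₗ mulLeftLinearMap n 𝕜 (K j))

theorem krausMap_apply [Fintype n] (K : ι → Matrix m n 𝕜) (B : Matrix ι ι 𝕜)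
    (ρ : Matrix n n 𝕜) : krausMap K B ρ = ∑ j, ∑ k, B j k • (K j * ρ * (K k)ᴴ) := by
  simp [krausMap]

theorem krausMap_one_apply [Fintype n] [DecidableEq ι] (K : ι → Matrix m n 𝕜)
    (ρ : Matrix n n 𝕜) : krausMap K 1 ρ = ∑ k, K k * ρ * (K k)ᴴ := by
  simp [krausMap_apply, one_apply, ite_smul]

theorem trace_krausMap_apply [Fintype m] [Fintype n] (K : ι → Matrix m n 𝕜) (B : Matrix ι ι 𝕜)
    (ρ : Matrix n n 𝕜) :
    (krausMap K B ρ).trace = ((∑ p : ι × ι, B p.2 p.1 • ((K p.1)ᴴ * K p.2)) * ρ).trace := by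
  rw [Fintype.sum_prod_type, Finset.sum_comm]
  simp only [krausMap_apply, trace_sum, trace_smul, Matrix.sum_mul, Matrix.smul_mul,
    trace_mul_cycle (K _) ρ]

theorem sum_smul_conjTranspose_mul_eq_one_of_trace_krausMap [Fintype m] [Fintype n]
    [DecidableEq n] {K : ι → Matrix m n 𝕜} {B : Matrix ι ι 𝕜}
    (h : ∀ ρ, (krausMap K B ρ).trace = ρ.trace) :
    ∑ p : ι × ι, B p.2 p.1 • ((K p.1)ᴴ * K p.2) = 1 :=
  ext_iff_trace_mul_right.mpr fun ρ => by rw [← trace_krausMap_apply, h, Matrix.one_mul]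

theorem eq_of_trace_krausMap [Fintype m] [Fintype n] [DecidableEq n] {K : ι → Matrix m n 𝕜}
    (hLI : LinearIndependent 𝕜 (fun jk : ι × ι => (K jk.1)ᴴ * K jk.2)) {B B' : Matrix ι ι 𝕜}
    (h : ∀ ρ, (krausMap K B ρ).trace = ρ.trace) (h' : ∀ ρ, (krausMap K B' ρ).trace = ρ.trace) :
    B = B' :=
  ext fun j k => Fintype.linearIndependent_iffₛ.mp hLI _ _
    ((sum_smul_conjTranspose_mul_eq_one_of_trace_krausMap h).trans
      (sum_smul_conjTranspose_mul_eq_one_of_trace_krausMap h').symm) (k, j)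

def krausColumns (K : ι → Matrix m n 𝕜) : Matrix (m × n) ι 𝕜 :=
  of fun p k => K k p.1 p.2

theorem krausColumns_mulVec_injective {K : ι → Matrix m n 𝕜} (hK : LinearIndependent 𝕜 K) :
    Function.Injective (krausColumns K).mulVec := by
  intro c c' h
  refine funext (Fintype.linearIndependent_iffₛ.mp hK c c' ?_)
  ext i j
  simpa [krausColumns, mulVec, dotProduct, Matrix.sum_apply, mul_comm] using congrFun h (i, j)

end Kraus

section Choi

variable {d d' : ℕ}

theorem choi_apply_s15 (Φ : Matrix (Fin d) (Fin d) ℂ →ₗ[ℂ] Matrix (Fin d') (Fin d') ℂ)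
    (p q : Fin d' × Fin d) : choi Φ p q = Φ (single p.2 q.2 1) p.1 q.1 := by
  simp [choi, Matrix.sum_apply, single_apply, ite_and]

theorem choi_injective_s15 : Function.Injective (choi (d := d) (d' := d')) := by
  intro Φ Ψ h
  refine ext_linearMap ℂ fun i j => LinearMap.ext_ring ?_
  ext a b
  simpa [choi_apply_s15] using congrFun (congrFun h (a, i)) (b, j)

theorem choi_add (Φ Ψ : Matrix (Fin d) (Fin d) ℂ →ₗ[ℂ] Matrix (Fin d') (Fin d') ℂ) :
    choi (Φ + Ψ) = choi Φ + choi Ψ := by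
  ext p q
  simp [choi_apply_s15]

theorem choi_smul (c : ℂ) (Φ : Matrix (Fin d) (Fin d) ℂ →ₗ[ℂ] Matrix (Fin d') (Fin d') ℂ) :
    choi (c • Φ) = c • choi Φ := by
  ext p q
  simp [choi_apply_s15]

theorem choi_krausMap {ι : Type*} [Fintype ι] (K : ι → Matrix (Fin d') (Fin d) ℂ)
    (B : Matrix ι ι ℂ) : choi (krausMap K B) = krausColumns K * B * (krausColumns K)ᴴ := by
  ext p q
  simp only [choi_apply_s15, krausMap_apply, Matrix.sum_apply, Matrix.smul_apply,
    mul_single_mul_apply]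
  simp only [krausColumns, mul_apply, of_apply, conjTranspose_apply, Finset.sum_mul]
  rw [Finset.sum_comm]
  simp only [smul_eq_mul, RCLike.star_def, mul_one]
  exact Finset.sum_congr rfl fun _ _ => Finset.sum_congr rfl fun _ _ => by ring

end Choi

theorem choi_extremality_general {d d' N : ℕ}
    (K : Fin N → Matrix (Fin d') (Fin d) ℂ)
    (hLI : LinearIndependent ℂ (fun jk : Fin N × Fin N => (K jk.1)ᴴ * K jk.2))
    (C : Matrix (Fin d) (Fin d) ℂ →ₗ[ℂ] Matrix (Fin d') (Fin d') ℂ)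
    (hC : ∀ ρ, C ρ = ∑ k, K k * ρ * (K k)ᴴ) :
    ∀ C₁ C₂ : Matrix (Fin d) (Fin d) ℂ →ₗ[ℂ] Matrix (Fin d') (Fin d') ℂ,
      IsChannel C₁ → IsChannel C₂ →
      (∀ ρ, C ρ = (2 : ℂ)⁻¹ • (C₁ ρ + C₂ ρ)) →
      C₁ = C₂ ∧ C₁ = C := by
  intro C₁ C₂ h₁ h₂ hmix
  set V := krausColumns K
  have hCK : C = krausMap K 1 := LinearMap.ext fun ρ => by rw [hC, krausMap_one_apply]
  have h2C : (2 : ℂ) • C = C₁ + C₂ := LinearMap.ext fun ρ => by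
    simp [hmix, smul_smul]
  have hC_trace : ∀ ρ, (C ρ).trace = ρ.trace := fun ρ => by
    rw [hmix, trace_smul, trace_add, h₁.2, h₂.2, smul_eq_mul]
    ring
  have hker : ∀ y, Vᴴ *ᵥ y = 0 → choi C₁ *ᵥ y = 0 := fun y hy =>
    h₁.1.mulVec_eq_zero_of_add_mulVec_eq_zero h₂.1 <| by
      rw [← choi_add, ← h2C, choi_smul, hCK, choi_krausMap, Matrix.mul_one, smul_mulVec,
        ← mulVec_mulVec, hy, mulVec_zero, smul_zero]
  obtain ⟨B, hB⟩ := h₁.1.isHermitian.exists_eq_mul_mul_conjTranspose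
    (krausColumns_mulVec_injective hLI.of_conjTranspose_mul) hker
  have hC₁B : C₁ = krausMap K B := choi_injective_s15 (hB.trans (choi_krausMap K B).symm)
  have hB1 : B = 1 := eq_of_trace_krausMap hLI (hC₁B ▸ h₁.2) (hCK ▸ hC_trace)
  have hC₁ : C₁ = C := by rw [hC₁B, hB1, hCK]
  have hC₂ : C + C = C + C₂ := by rw [← two_smul ℂ, h2C, hC₁]
  exact ⟨hC₁.trans (add_left_cancel hC₂), hC₁⟩

/-- Choi's extremality criterion, one direction: a channel `C` with
Kraus representation `C(ρ) = ∑ k, K_k ρ K_k†`, `∑ k, K_k† K_k = 1`, is extremal in the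
convex set of channels whenever the family `{K_j† K_k}_{j,k}` is linearly independent:
if `C = ½(C₁ + C₂)` for channels `C₁, C₂`, then `C₁ = C₂ = C`. -/
theorem choi_extremality {d d' N : ℕ}
    (K : Fin N → Matrix (Fin d') (Fin d) ℂ)
    (hK : ∑ k, (K k)ᴴ * K k = 1)
    (hLI : LinearIndependent ℂ (fun jk : Fin N × Fin N => (K jk.1)ᴴ * K jk.2))
    (C : Matrix (Fin d) (Fin d) ℂ →ₗ[ℂ] Matrix (Fin d') (Fin d') ℂ)
    (hC : ∀ ρ, C ρ = ∑ k, K k * ρ * (K k)ᴴ) :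
    ∀ C₁ C₂ : Matrix (Fin d) (Fin d) ℂ →ₗ[ℂ] Matrix (Fin d') (Fin d') ℂ,
      IsChannel C₁ → IsChannel C₂ →
      (∀ ρ, C ρ = (2 : ℂ)⁻¹ • (C₁ ρ + C₂ ρ)) →
      C₁ = C₂ ∧ C₁ = C :=
  choi_extremality_general K hLI C hC
end

section
/- Tsirelson's bound: for observables A₀, A₁ on H_A and B₀, B₁ on H_B with operator norm at most 1 and each A_n commuting with each B_m (e.g. acting on different tensor factors), and any state ρ, |⟨A₀B₀⟩ + ⟨A₀B₁⟩ + ⟨A₁B₀⟩ − ⟨A₁B₁⟩| ≤ 2√2, where ⟨A_nB_m⟩ = Tr[ρ (A_n ⊗ B_m)]. -/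
/-!
For the CHSH operator `C = A₀ ⊗ (B₀ + B₁) + A₁ ⊗ (B₀ - B₁)` there is a sum-of-squares certificate
`8 - 2√2 C = (√2 A₀ ⊗ 1 - 1 ⊗ (B₀ + B₁))² + (√2 A₁ ⊗ 1 - 1 ⊗ (B₀ - B₁))²
  + 2 ((1 - A₀²) ⊗ 1 + (1 - A₁²) ⊗ 1 + 1 ⊗ (1 - B₀²) + 1 ⊗ (1 - B₁²))`,
each term being positive semidefinite, so `C ≤ 2√2`. Replacing `Aₙ` by `-Aₙ` gives `-C ≤ 2√2`,
and pairing both operator inequalities with the state `ρ` bounds `|Tr ρC|` by `2√2`.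
-/

open Matrix Kronecker
open scoped ComplexOrder

lemma RCLike.norm_le_of_sub_nonneg_of_add_nonneg {𝕜 : Type*} [RCLike 𝕜] {c : ℝ} {z : 𝕜}
    (h₁ : 0 ≤ (c : 𝕜) - z) (h₂ : 0 ≤ (c : 𝕜) + z) : ‖z‖ ≤ c := by
  obtain ⟨hre₁, him⟩ := RCLike.nonneg_iff.mp h₁
  have hre₂ := (RCLike.nonneg_iff.mp h₂).1
  simp only [map_sub, map_add, RCLike.ofReal_re, RCLike.ofReal_im, zero_sub, neg_eq_zero]
    at hre₁ hre₂ him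
  rw [← RCLike.conj_eq_iff_re.mp (RCLike.conj_eq_iff_im.mpr him), RCLike.norm_ofReal, abs_le]
  constructor <;> linarith

namespace Matrix

section Kronecker

variable {α l m n p : Type*} [Ring α]

lemma kronecker_sub (A : Matrix l m α) (B C : Matrix n p α) :
    A ⊗ₖ (B - C) = A ⊗ₖ B - A ⊗ₖ C := by
  ext; simp [mul_sub]

lemma sub_kronecker (A B : Matrix l m α) (C : Matrix n p α) :
    (A - B) ⊗ₖ C = A ⊗ₖ C - B ⊗ₖ C := by
  ext; simp [sub_mul]

lemma neg_kronecker (A : Matrix l m α) (B : Matrix n p α) : (-A) ⊗ₖ B = -(A ⊗ₖ B) := by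
  ext; simp

end Kronecker

variable {𝕜 m n : Type*} [RCLike 𝕜]

lemma IsHermitian.kronecker {A : Matrix m m 𝕜} {B : Matrix n n 𝕜} (hA : A.IsHermitian)
    (hB : B.IsHermitian) : (A ⊗ₖ B).IsHermitian := by
  rw [IsHermitian, conjTranspose_kronecker, hA.eq, hB.eq]

def chshOperator (A₀ A₁ : Matrix m m 𝕜) (B₀ B₁ : Matrix n n 𝕜) : Matrix (m × n) (m × n) 𝕜 :=
  A₀ ⊗ₖ (B₀ + B₁) + A₁ ⊗ₖ (B₀ - B₁)

lemma chshOperator_neg_neg (A₀ A₁ : Matrix m m 𝕜) (B₀ B₁ : Matrix n n 𝕜) :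
    chshOperator (-A₀) (-A₁) B₀ B₁ = -chshOperator A₀ A₁ B₀ B₁ := by
  simp only [chshOperator, neg_kronecker, neg_add]

variable [Fintype m] [Fintype n]

lemma IsHermitian.posSemidef_mul_self {A : Matrix n n 𝕜} (hA : A.IsHermitian) :
    (A * A).PosSemidef := by
  simpa only [hA.eq] using posSemidef_conjTranspose_mul_self A

open scoped MatrixOrder in
lemma PosSemidef.trace_mul_nonneg {ρ M : Matrix n n 𝕜} (hρ : ρ.PosSemidef)
    (hM : M.PosSemidef) : 0 ≤ (ρ * M).trace := by
  classical
  obtain ⟨B, rfl⟩ := CStarAlgebra.nonneg_iff_eq_star_mul_self.mp hM.nonneg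
  rw [star_eq_conjTranspose, ← mul_assoc, trace_mul_cycle]
  exact (hρ.mul_mul_conjTranspose_same B).trace_nonneg

lemma norm_trace_mul_le_of_posSemidef [DecidableEq n] {ρ M : Matrix n n 𝕜} {c : ℝ}
    (hρ : ρ.PosSemidef) (hρtr : ρ.trace = 1) (hle : (c • 1 - M).PosSemidef)
    (hge : (c • 1 + M).PosSemidef) : ‖(ρ * M).trace‖ ≤ c := by
  have htrace (N : Matrix n n 𝕜) : (ρ * (c • 1 + N)).trace = c + (ρ * N).trace := by
    rw [mul_add, trace_add, mul_smul_comm, Matrix.mul_one, trace_smul, hρtr,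
      RCLike.real_smul_eq_coe_mul, mul_one]
  apply RCLike.norm_le_of_sub_nonneg_of_add_nonneg
  · simpa only [sub_eq_add_neg, htrace, mul_neg, trace_neg] using hρ.trace_mul_nonneg hle
  · simpa only [htrace] using hρ.trace_mul_nonneg hge

variable {A₀ A₁ : Matrix m m 𝕜} {B₀ B₁ : Matrix n n 𝕜}

lemma trace_mul_chshOperator (ρ : Matrix (m × n) (m × n) 𝕜) :
    (ρ * chshOperator A₀ A₁ B₀ B₁).trace = (ρ * (A₀ ⊗ₖ B₀)).trace + (ρ * (A₀ ⊗ₖ B₁)).trace +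
      (ρ * (A₁ ⊗ₖ B₀)).trace - (ρ * (A₁ ⊗ₖ B₁)).trace := by
  simp only [chshOperator, kronecker_add, kronecker_sub, mul_add, mul_sub, trace_add, trace_sub]
  ring

variable [DecidableEq m] [DecidableEq n]

lemma smul_one_sub_smul_chshOperator_eq_sum_squares (s : ℝ) :
    (2 * s * s + 4) • (1 : Matrix (m × n) (m × n) 𝕜) - (2 * s) • chshOperator A₀ A₁ B₀ B₁ =
      (s • (A₀ ⊗ₖ 1) - 1 ⊗ₖ (B₀ + B₁)) * (s • (A₀ ⊗ₖ 1) - 1 ⊗ₖ (B₀ + B₁)) +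
      (s • (A₁ ⊗ₖ 1) - 1 ⊗ₖ (B₀ - B₁)) * (s • (A₁ ⊗ₖ 1) - 1 ⊗ₖ (B₀ - B₁)) +
      (s * s) • ((1 - A₀ * A₀) ⊗ₖ 1 + (1 - A₁ * A₁) ⊗ₖ 1) +
      (2 : ℝ) • (1 ⊗ₖ (1 - B₀ * B₀) + 1 ⊗ₖ (1 - B₁ * B₁)) := by
  simp only [chshOperator, sub_mul, mul_sub, add_mul, mul_add, smul_mul_assoc, mul_smul_comm,
    ← mul_kronecker_mul, Matrix.mul_one, Matrix.one_mul, kronecker_sub, sub_kronecker,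
    kronecker_add, one_kronecker_one]
  module

theorem posSemidef_two_sqrt_two_smul_one_sub_chshOperator
    (hA₀ : A₀.IsHermitian) (hA₁ : A₁.IsHermitian) (hB₀ : B₀.IsHermitian) (hB₁ : B₁.IsHermitian)
    (hA₀n : (1 - A₀ * A₀).PosSemidef) (hA₁n : (1 - A₁ * A₁).PosSemidef)
    (hB₀n : (1 - B₀ * B₀).PosSemidef) (hB₁n : (1 - B₁ * B₁).PosSemidef) :
    ((2 * √2 : ℝ) • 1 - chshOperator A₀ A₁ B₀ B₁).PosSemidef := by
  have hP (A : Matrix m m 𝕜) (B : Matrix n n 𝕜) (hA : A.IsHermitian) (hB : B.IsHermitian) :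
      ((√2 • (A ⊗ₖ 1) - 1 ⊗ₖ B) * (√2 • (A ⊗ₖ 1) - 1 ⊗ₖ B)).PosSemidef :=
    IsHermitian.posSemidef_mul_self <|
      ((hA.kronecker isHermitian_one).smul (IsSelfAdjoint.all _)).sub
        (isHermitian_one.kronecker hB)
  have hsum : ((2 * √2 * √2 + 4) • 1 - (2 * √2) • chshOperator A₀ A₁ B₀ B₁).PosSemidef := by
    rw [smul_one_sub_smul_chshOperator_eq_sum_squares]
    exact (((hP A₀ _ hA₀ (hB₀.add hB₁)).add (hP A₁ _ hA₁ (hB₀.sub hB₁))).add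
      (((hA₀n.kronecker .one).add (hA₁n.kronecker .one)).smul (mul_self_nonneg √2))).add
      (((PosSemidef.one.kronecker hB₀n).add (PosSemidef.one.kronecker hB₁n)).smul zero_le_two)
  have h2 : 0 < 2 * √2 := by positivity
  convert hsum.smul (inv_nonneg.mpr h2.le) using 1
  rw [smul_sub, smul_smul, smul_smul, inv_mul_cancel₀ h2.ne', one_smul]
  congr 2
  rw [eq_inv_mul_iff_mul_eq₀ h2.ne']
  linear_combination 2 * Real.mul_self_sqrt (zero_le_two : (0 : ℝ) ≤ 2)

end Matrix

/-- Tsirelson's bound: for Hermitian observables `A₀, A₁` on `H_A` and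
`B₀, B₁` on `H_B` of operator norm at most 1 (expressed as `I - A² ⪰ 0`, which for a
Hermitian matrix is equivalent to `‖A‖ ≤ 1`), acting on different tensor factors, and
any state `ρ` on `H_A ⊗ H_B`,
`|⟨A₀B₀⟩ + ⟨A₀B₁⟩ + ⟨A₁B₀⟩ − ⟨A₁B₁⟩| ≤ 2√2`, where `⟨A B⟩ = Tr[ρ (A ⊗ B)]`. -/
theorem tsirelson_bound {a b : ℕ}
    (A₀ A₁ : Matrix (Fin a) (Fin a) ℂ) (B₀ B₁ : Matrix (Fin b) (Fin b) ℂ)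
    (hA₀ : A₀.IsHermitian) (hA₁ : A₁.IsHermitian)
    (hB₀ : B₀.IsHermitian) (hB₁ : B₁.IsHermitian)
    (hA₀n : ((1 : Matrix (Fin a) (Fin a) ℂ) - A₀ * A₀).PosSemidef)
    (hA₁n : ((1 : Matrix (Fin a) (Fin a) ℂ) - A₁ * A₁).PosSemidef)
    (hB₀n : ((1 : Matrix (Fin b) (Fin b) ℂ) - B₀ * B₀).PosSemidef)
    (hB₁n : ((1 : Matrix (Fin b) (Fin b) ℂ) - B₁ * B₁).PosSemidef)
    (ρ : Matrix (Fin a × Fin b) (Fin a × Fin b) ℂ)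
    (hρ : ρ.PosSemidef) (hρtr : ρ.trace = 1) :
    ‖(ρ * (A₀ ⊗ₖ B₀)).trace + (ρ * (A₀ ⊗ₖ B₁)).trace +
        (ρ * (A₁ ⊗ₖ B₀)).trace - (ρ * (A₁ ⊗ₖ B₁)).trace‖
      ≤ 2 * Real.sqrt 2 := by
  have hupper := posSemidef_two_sqrt_two_smul_one_sub_chshOperator hA₀ hA₁ hB₀ hB₁
    hA₀n hA₁n hB₀n hB₁n
  have hlower := posSemidef_two_sqrt_two_smul_one_sub_chshOperator hA₀.neg hA₁.neg hB₀ hB₁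
    (by rwa [neg_mul_neg]) (by rwa [neg_mul_neg]) hB₀n hB₁n
  rw [chshOperator_neg_neg, sub_neg_eq_add] at hlower
  rw [← trace_mul_chshOperator]
  exact norm_trace_mul_le_of_posSemidef hρ hρtr hupper hlower
end

section
/- For the channel R_α of Eq. (counter) with α ∈ [0,1], the CHSH-type correlator defined by c_α := |⟨A₀B₀⟩ + ⟨A₀B₁⟩ + ⟨A₁B₀⟩ − ⟨A₁B₁⟩| with ⟨A_nB_m⟩ = Tr[(σ_z^{A'} ⊗ |n⟩⟨n|_A ⊗ σ_z^{B'} ⊗ |m⟩⟨m|_B ⊗ I) R_α], equals |4 − 6α|. -/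
open Matrix BigOperators

/-- A qubit index. -/
abbrev Q := Fin 2

/-- The state `|Ψ_α⟩ = √α|00⟩ + √(1−α)|11⟩` on the pair of qubits `W_A W_B`. -/
noncomputable def psiW (α : ℝ) : Q × Q → ℂ := fun w =>
  if w = (0, 0) then (Real.sqrt α : ℂ)
  else if w = (1, 1) then (Real.sqrt (1 - α) : ℂ) else 0

/-- The product vector `|I⟩⟩_{AB,AB} ⊗ (1/√2)|I⟩⟩_{X_A X_B} ⊗ |Ψ_α⟩_{W_A W_B}` on the
eight qubits `(A, B, A_ref, B_ref, X_A, X_B, W_A, W_B)`. -/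
noncomputable def preVec (α : ℝ) : Q × Q × Q × Q × Q × Q × Q × Q → ℂ :=
  fun (a, b, ar, br, xA, xB, wA, wB) =>
    (if a = ar then (1 : ℂ) else 0) * (if b = br then (1 : ℂ) else 0) *
      (((Real.sqrt 2 : ℂ))⁻¹ * if xA = xB then 1 else 0) * psiW α (wA, wB)

/-- `|Φ_α⟩ = (𝔼 ⊗ I) (|I⟩⟩_{AB,AB} ⊗ (1/√2)|I⟩⟩_{X_A X_B} ⊗ |Ψ_α⟩)`, where `𝔼` is the
tensor product of the two controlled swaps: `A ↔ X_A` controlled by `W_A`, and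
`B ↔ X_B` controlled by `W_B`. -/
noncomputable def phiVec (α : ℝ) : Q × Q × Q × Q × Q × Q × Q × Q → ℂ :=
  fun (a, b, ar, br, xA, xB, wA, wB) =>
    preVec α (if wA = 1 then xA else a, if wB = 1 then xB else b, ar, br,
      if wA = 1 then a else xA, if wB = 1 then b else xB, wA, wB)

/-- The Kraus vectors `|K^α_{mn}⟩⟩ = [(Σ_{A W_A})^{mn} ⊗ ⟨m|_{X_A}⟨n|_{X_B}] |Φ_α⟩`,
where `Σ_{A W_A} = |1⟩⟨1|_{W_A} ⊗ σ_x^A + |0⟩⟨0|_{W_A} ⊗ I_A`, as vectors on the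
output systems `(A, W_A, W_B, B')` tensored with the reference input systems `(A, B)`. -/
noncomputable def Kvec (α : ℝ) (m n : Q) : (Q × Q × Q × Q) × (Q × Q) → ℂ :=
  fun ((a, wA, wB, bo), (ar, br)) =>
    phiVec α (if m = 1 ∧ n = 1 ∧ wA = 1 then a + 1 else a, bo, ar, br, m, n, wA, wB)

/-- The Choi–Jamiołkowski operator `R_α = ∑_{m,n} |K^α_{mn}⟩⟩⟨⟨K^α_{mn}|` of the
channel `𝓡_α`. -/
noncomputable def Ralpha (α : ℝ) :
    Matrix ((Q × Q × Q × Q) × (Q × Q)) ((Q × Q × Q × Q) × (Q × Q)) ℂ :=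
  Matrix.of fun x y =>
    ∑ m : Q, ∑ n : Q, Kvec α m n x * (starRingEnd ℂ) (Kvec α m n y)

/-- The `σ_z` eigenvalue attached to a computational-basis index. -/
def sz (k : Q) : ℂ := if k = 0 then 1 else -1

/-- The correlator `⟨A_n B_m⟩ = Tr[(σ_z^{A'} ⊗ |n⟩⟨n|_A ⊗ σ_z^{B'} ⊗ |m⟩⟨m|_B ⊗ I) R_α]`
(with `σ_z` measured on the output qubits `A` and `B`, identity on `W_A W_B`). -/
noncomputable def corr (α : ℝ) (n m : Q) : ℂ :=
  ∑ a : Q, ∑ wA : Q, ∑ wB : Q, ∑ bo : Q,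
    sz a * sz bo * Ralpha α ((a, wA, wB, bo), (n, m)) ((a, wA, wB, bo), (n, m))

/-!
The diagonal of `R_α` splits along the control qubits `W_A W_B`. On `|00⟩` (weight `α`) both
controlled swaps are idle and the channel is the identity, so it contributes `α σ_z(n) σ_z(m)`
to `⟨A_n B_m⟩`. On `|11⟩` (weight `1 - α`) the inputs are swapped away and the outputs come from
the maximally entangled pair `X_A X_B`, perfectly `σ_z`-correlated, except that for `n = m = 1`
the `σ_x` in `Σ_{A W_A}` flips `A` and the correlation becomes `-1`. Hence
`⟨A_n B_m⟩ = α σ_z(n) σ_z(m) + (1 - α) (-1)^{nm}`, and the CHSH combination is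
`α (1 - 1 - 1 - 1) + 4 (1 - α) = 4 - 6α`.
-/

lemma Kvec_of_ne {α : ℝ} {wA wB : Q} (h : wA ≠ wB) (m n a bo ar br : Q) :
    Kvec α m n ((a, wA, wB, bo), (ar, br)) = 0 := by
  have hψ : psiW α (wA, wB) = 0 := by
    unfold psiW
    split_ifs <;> simp_all
  simp [Kvec, phiVec, preVec, hψ]

lemma Kvec_zero_zero (α : ℝ) (m n a bo ar br : Q) :
    Kvec α m n ((a, 0, 0, bo), (ar, br)) =
      if a = ar ∧ bo = br ∧ m = n then (Real.sqrt 2 : ℂ)⁻¹ * Real.sqrt α else 0 := by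
  simp only [Kvec, phiVec, preVec, psiW, zero_ne_one, and_false, ↓reduceIte]
  split_ifs <;> simp_all

lemma Kvec_one_one (α : ℝ) (m n a bo ar br : Q) :
    Kvec α m n ((a, 1, 1, bo), (ar, br)) =
      if m = ar ∧ n = br ∧ bo = (if m = 1 ∧ n = 1 then a + 1 else a) then
        (Real.sqrt 2 : ℂ)⁻¹ * Real.sqrt (1 - α) else 0 := by
  simp only [Kvec, phiVec, preVec, psiW, one_ne_zero, and_true, Prod.mk.injEq, and_self,
    ↓reduceIte]
  split_ifs <;> simp_all

lemma Ralpha_apply_self (α : ℝ) (x : (Q × Q × Q × Q) × (Q × Q)) :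
    Ralpha α x x = ∑ m : Q, ∑ n : Q, ((Complex.normSq (Kvec α m n x) : ℝ) : ℂ) := by
  simp only [Ralpha, Matrix.of_apply, Complex.mul_conj]

lemma normSq_inv_sqrt_two_mul_sqrt {t : ℝ} (ht : 0 ≤ t) :
    Complex.normSq ((Real.sqrt 2 : ℂ)⁻¹ * Real.sqrt t) = t / 2 := by
  rw [← Complex.ofReal_inv, ← Complex.ofReal_mul, Complex.normSq_ofReal, ← Real.sqrt_inv,
    ← Real.sqrt_mul (by positivity), Real.mul_self_sqrt (by positivity), inv_mul_eq_div]

lemma Ralpha_diag_of_ne (α : ℝ) {wA wB : Q} (h : wA ≠ wB) (a bo n m : Q) :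
    Ralpha α ((a, wA, wB, bo), (n, m)) ((a, wA, wB, bo), (n, m)) = 0 := by
  simp [Ralpha_apply_self, Kvec_of_ne h]

lemma Ralpha_diag_zero_zero {α : ℝ} (hα : 0 ≤ α) (a bo n m : Q) :
    Ralpha α ((a, 0, 0, bo), (n, m)) ((a, 0, 0, bo), (n, m)) =
      if a = n ∧ bo = m then α else 0 := by
  simp only [Ralpha_apply_self, Kvec_zero_zero, apply_ite Complex.normSq,
    normSq_inv_sqrt_two_mul_sqrt hα, Complex.normSq_zero]
  split_ifs <;> simp_all [Fin.sum_univ_two]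

lemma Ralpha_diag_one_one {α : ℝ} (hα : α ≤ 1) (a bo n m : Q) :
    Ralpha α ((a, 1, 1, bo), (n, m)) ((a, 1, 1, bo), (n, m)) =
      if bo = (if n = 1 ∧ m = 1 then a + 1 else a) then ((1 - α) / 2 : ℝ) else 0 := by
  simp only [Ralpha_apply_self, Kvec_one_one, apply_ite Complex.normSq,
    normSq_inv_sqrt_two_mul_sqrt (sub_nonneg.2 hα), Complex.normSq_zero]
  simp [ite_and, apply_ite Complex.ofReal]

lemma corr_eq {α : ℝ} (h0 : 0 ≤ α) (h1 : α ≤ 1) (n m : Q) :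
    corr α n m = α * sz n * sz m + (1 - α) * (if n = 1 ∧ m = 1 then -1 else 1) := by
  simp only [corr, Fin.sum_univ_two, Ralpha_diag_zero_zero h0, Ralpha_diag_one_one h1,
    Ralpha_diag_of_ne α zero_ne_one, Ralpha_diag_of_ne α one_ne_zero]
  fin_cases n <;> fin_cases m <;> simp [sz] <;> ring

/-- for the channel `𝓡_α` with `α ∈ [0,1]`, the CHSH-type correlator
`c_α = |⟨A₀B₀⟩ + ⟨A₀B₁⟩ + ⟨A₁B₀⟩ − ⟨A₁B₁⟩|` equals `|4 − 6α|`. -/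
theorem chsh_correlator_eq (α : ℝ) (h0 : 0 ≤ α) (h1 : α ≤ 1) :
    ‖corr α 0 0 + corr α 0 1 + corr α 1 0 - corr α 1 1‖ = |4 - 6 * α| := by
  have hchsh : corr α 0 0 + corr α 0 1 + corr α 1 0 - corr α 1 1 = ((4 - 6 * α : ℝ) : ℂ) := by
    simp [corr_eq h0 h1, sz]
    ring
  rw [hchsh, Complex.norm_real, Real.norm_eq_abs]
end
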